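/- arXiv:2101.03627 — 5 statements merged into one kernel-verified Lean document; each statement's English description precedes it below -/
import Mathlib

section
/- Let b > 0 and let t*(b) be the unique t > max_{k∈K} c_k with ∑_{k∈K} α_k/(t − c_k) = b. Then for every allocation (b_k)_{k∈K} with b_k > 0 for all k and ∑_{k∈K} b_k = b, one has max_{k∈K} (c_k + α_k/b_k) ≥ t*(b), with equality if and only if b_k = α_k/(t*(b) − c_k) for every k. In particular the allocation b_k = α_k/(t*(b) − c_k) minimizes the round length max_k (c_k + α_k/b_k) subject to ∑_k b_k = b. -/
/-!
For `t > max c`, client `k` finishes by time `t` exactly when it receives at least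
`α_k / (t - c_k)`. So a round of length `< t*` would need strictly more than
`∑ α_k / (t* - c_k) = b` in total, and a round of length exactly `t*` needs each `b_k` to be
at least its water-filling share; as both allocations sum to `b`, all these inequalities
are equalities.
-/

open Finset

lemma add_div_le_iff_div_sub_le {a b c t : ℝ} (hb : 0 < b) (hct : c < t) :
    c + a / b ≤ t ↔ a / (t - c) ≤ b := by
  rw [← le_sub_iff_add_le', div_le_iff₀ hb, div_le_iff₀ (sub_pos.2 hct), mul_comm]

lemma add_div_lt_iff_div_sub_lt {a b c t : ℝ} (hb : 0 < b) (hct : c < t) :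
    c + a / b < t ↔ a / (t - c) < b := by
  rw [← lt_sub_iff_add_lt', div_lt_iff₀ hb, div_lt_iff₀ (sub_pos.2 hct), mul_comm]

section RoundLength

variable {ι : Type*} [Fintype ι] [Nonempty ι] {α c b : ι → ℝ} {t : ℝ}

lemma sup'_add_div_le_iff (hb : ∀ k, 0 < b k) (hct : ∀ k, c k < t) :
    univ.sup' univ_nonempty (fun k => c k + α k / b k) ≤ t ↔ ∀ k, α k / (t - c k) ≤ b k := by
  simp only [sup'_le_iff, mem_univ, true_imp_iff]
  exact forall_congr' fun k => add_div_le_iff_div_sub_le (hb k) (hct k)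

lemma sup'_add_div_lt_iff (hb : ∀ k, 0 < b k) (hct : ∀ k, c k < t) :
    univ.sup' univ_nonempty (fun k => c k + α k / b k) < t ↔ ∀ k, α k / (t - c k) < b k := by
  simp only [sup'_lt_iff, mem_univ, true_imp_iff]
  exact forall_congr' fun k => add_div_lt_iff_div_sub_lt (hb k) (hct k)

end RoundLength

theorem stmt_1_general {ι : Type*} [Fintype ι] [Nonempty ι] (α c : ι → ℝ)
    (b : ℝ) (tstar : ℝ)
    (htgt : Finset.univ.sup' Finset.univ_nonempty c < tstar)
    (hteq : ∑ k, α k / (tstar - c k) = b)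
    (bk : ι → ℝ) (hbk : ∀ k, 0 < bk k) (hsum : ∑ k, bk k = b) :
    tstar ≤ Finset.univ.sup' Finset.univ_nonempty (fun k => c k + α k / bk k) ∧
    (Finset.univ.sup' Finset.univ_nonempty (fun k => c k + α k / bk k) = tstar ↔
      ∀ k, bk k = α k / (tstar - c k)) := by
  have hct : ∀ k, c k < tstar := fun k => (le_sup' c (mem_univ k)).trans_lt htgt
  have hsums : ∑ k, α k / (tstar - c k) = ∑ k, bk k := hteq.trans hsum.symm
  have hge : tstar ≤ univ.sup' univ_nonempty (fun k => c k + α k / bk k) := by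
    refine not_lt.1 fun hlt => hsums.not_lt (sum_lt_sum_of_nonempty univ_nonempty fun k _ => ?_)
    exact (sup'_add_div_lt_iff hbk hct).1 hlt k
  refine ⟨hge, ?_⟩
  rw [le_antisymm_iff, and_iff_left hge, sup'_add_div_le_iff hbk hct]
  constructor
  · intro hle k
    exact ((sum_eq_sum_iff_of_le fun k _ => hle k).1 hsums k (mem_univ k)).symm
  · exact fun heq k => (heq k).ge

/-- Optimality of the water-filling intra-service bandwidth allocation: any feasible
allocation has round length `max_k (c_k + α_k / b_k) ≥ t*(b)`, with equality iff
`b_k = α_k / (t*(b) − c_k)` for every `k`. -/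
theorem stmt_1 {ι : Type*} [Fintype ι] [Nonempty ι] (α c : ι → ℝ)
    (hα : ∀ k, 0 < α k) (hc : ∀ k, 0 < c k)
    (b : ℝ) (hb : 0 < b) (tstar : ℝ)
    (htgt : Finset.univ.sup' Finset.univ_nonempty c < tstar)
    (hteq : ∑ k, α k / (tstar - c k) = b)
    (bk : ι → ℝ) (hbk : ∀ k, 0 < bk k) (hsum : ∑ k, bk k = b) :
    tstar ≤ Finset.univ.sup' Finset.univ_nonempty (fun k => c k + α k / bk k) ∧
    (Finset.univ.sup' Finset.univ_nonempty (fun k => c k + α k / bk k) = tstar ↔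
      ∀ k, bk k = α k / (tstar - c k)) :=
  stmt_1_general α c b tstar htgt hteq bk hbk hsum
end

section
/- The inverse f* of b is strictly concave on [0, ∞). -/
/-!
Each summand `f ↦ α f / (1 - c f)` of `b` is strictly increasing and strictly convex on
`f < 1 / c`, hence so is `b` on `f < 1 / max c`. For `x ≠ y` and weights `λ, μ`, strict convexity
gives `b (λ f*(x) + μ f*(y)) < λ x + μ y = b (f*(λ x + μ y))`, and since `b` is increasing this is
the strict concavity of `f*`.
-/
open Set Finset

section

variable {𝕜 E β ι : Type*} [Semiring 𝕜] [PartialOrder 𝕜] [AddCommMonoid E] [AddCommMonoid β]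

theorem StrictConvexOn.finset_sum [PartialOrder β] [IsOrderedCancelAddMonoid β] [SMul 𝕜 E]
    [DistribMulAction 𝕜 β] {s : Set E} {t : Finset ι} (ht : t.Nonempty) {f : ι → E → β}
    (hf : ∀ i ∈ t, StrictConvexOn 𝕜 s (f i)) :
    StrictConvexOn 𝕜 s (fun x ↦ ∑ i ∈ t, f i x) := by
  obtain ⟨i₀, hi₀⟩ := ht
  refine ⟨(hf i₀ hi₀).1, fun x hx y hy hxy a b ha hb hab ↦ ?_⟩
  calc ∑ i ∈ t, f i (a • x + b • y) < ∑ i ∈ t, (a • f i x + b • f i y) :=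
        sum_lt_sum_of_nonempty ⟨i₀, hi₀⟩ fun i hi ↦ (hf i hi).2 hx hy hxy ha hb hab
    _ = a • ∑ i ∈ t, f i x + b • ∑ i ∈ t, f i y := by
        rw [sum_add_distrib, smul_sum, smul_sum]

theorem StrictConvexOn.strictConcaveOn_of_leftInvOn [PartialOrder E] [LinearOrder β]
    [SMul 𝕜 E] [SMul 𝕜 β] {s : Set β} {t : Set E} {g : β → E} {f : E → β}
    (hg : StrictConvexOn 𝕜 s g) (hg_mono : StrictMonoOn g s) (ht : Convex 𝕜 t)
    (hf : MapsTo f t s) (hgf : LeftInvOn g f t) : StrictConcaveOn 𝕜 t f := by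
  refine ⟨ht, fun x hx y hy hxy a b ha hb hab ↦ ?_⟩
  have hfxy : f x ≠ f y := hgf.injOn.ne hx hy hxy
  have hcomb : a • f x + b • f y ∈ s := hg.1 (hf hx) (hf hy) ha.le hb.le hab
  have hmid : a • x + b • y ∈ t := ht hx hy ha.le hb.le hab
  refine (hg_mono.lt_iff_lt hcomb (hf hmid)).1 ?_
  calc g (a • f x + b • f y) < a • g (f x) + b • g (f y) :=
        hg.2 (hf hx) (hf hy) hfxy ha hb hab
    _ = g (f (a • x + b • y)) := by rw [hgf hx, hgf hy, hgf hmid]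

end

theorem strictMonoOn_mul_div_one_sub_mul {α c : ℝ} (hα : 0 < α) (hc : 0 < c) :
    StrictMonoOn (fun f ↦ α * f / (1 - c * f)) (Iio (1 / c)) := by
  intro u hu v hv huv
  have hu' : 0 < 1 - c * u := sub_pos.2 ((lt_div_iff₀' hc).1 hu)
  have hv' : 0 < 1 - c * v := sub_pos.2 ((lt_div_iff₀' hc).1 hv)
  have key : α * v / (1 - c * v) - α * u / (1 - c * u)
      = α * (v - u) / ((1 - c * u) * (1 - c * v)) := by
    rw [div_sub_div _ _ hv'.ne' hu'.ne', div_eq_div_iff (by positivity) (by positivity)]; ring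
  have : 0 < α * (v - u) / ((1 - c * u) * (1 - c * v)) := by
    have := sub_pos.2 huv; positivity
  linarith

theorem strictConvexOn_mul_div_one_sub_mul {α c : ℝ} (hα : 0 < α) (hc : 0 < c) :
    StrictConvexOn ℝ (Iio (1 / c)) (fun f ↦ α * f / (1 - c * f)) := by
  refine ⟨convex_Iio _, fun u hu v hv huv a b ha hb hab ↦ ?_⟩
  have hu' : 0 < 1 - c * u := sub_pos.2 ((lt_div_iff₀' hc).1 hu)
  have hv' : 0 < 1 - c * v := sub_pos.2 ((lt_div_iff₀' hc).1 hv)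
  obtain rfl : b = 1 - a := by linarith
  have hw' : 0 < 1 - c * (a * u + (1 - a) * v) := by nlinarith
  have key : a * (α * u / (1 - c * u)) + (1 - a) * (α * v / (1 - c * v))
      - α * (a * u + (1 - a) * v) / (1 - c * (a * u + (1 - a) * v))
      = a * (1 - a) * α * c * (u - v) ^ 2
        / ((1 - c * u) * (1 - c * v) * (1 - c * (a * u + (1 - a) * v))) := by
    rw [mul_div_assoc', mul_div_assoc', div_add_div _ _ hu'.ne' hv'.ne',
      div_sub_div _ _ (by positivity) hw'.ne', div_eq_div_iff (by positivity) (by positivity)]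
    ring
  have : 0 < a * (1 - a) * α * c * (u - v) ^ 2
        / ((1 - c * u) * (1 - c * v) * (1 - c * (a * u + (1 - a) * v))) := by
    have := sub_ne_zero.2 huv; positivity
  simp only [smul_eq_mul]
  linarith

/-- The inverse `f*` of `b` is strictly concave on `[0, ∞)`. -/
theorem stmt_7 {ι : Type*} [Fintype ι] [Nonempty ι] (α c : ι → ℝ)
    (hα : ∀ k, 0 < α k) (hc : ∀ k, 0 < c k)
    (fstar : ℝ → ℝ)
    (hrange : ∀ x : ℝ, 0 ≤ x →
      fstar x ∈ Set.Ico (0 : ℝ) (1 / Finset.univ.sup' Finset.univ_nonempty c))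
    (hinv : ∀ x : ℝ, 0 ≤ x → ∑ k, α k * fstar x / (1 - c k * fstar x) = x) :
    StrictConcaveOn ℝ (Set.Ici 0) fstar := by
  set S := univ.sup' univ_nonempty c
  have hdom : ∀ k, Iio (1 / S) ⊆ Iio (1 / c k) := fun k ↦
    Iio_subset_Iio (one_div_le_one_div_of_le (hc k) (le_sup' c (mem_univ k)))
  have hconvex : StrictConvexOn ℝ (Iio (1 / S)) (fun f ↦ ∑ k, α k * f / (1 - c k * f)) :=
    StrictConvexOn.finset_sum univ_nonempty fun k _ ↦
      (strictConvexOn_mul_div_one_sub_mul (hα k) (hc k)).subset (hdom k) (convex_Iio _)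
  have hmono : StrictMonoOn (fun f ↦ ∑ k, α k * f / (1 - c k * f)) (Iio (1 / S)) :=
    fun u hu v hv huv ↦ sum_lt_sum_of_nonempty univ_nonempty fun k _ ↦
      strictMonoOn_mul_div_one_sub_mul (hα k) (hc k) (hdom k hu) (hdom k hv) huv
  exact hconvex.strictConcaveOn_of_leftInvOn hmono (convex_Ici 0)
    (fun x hx ↦ (hrange x hx).2) hinv
end

section
/- (Proposition 1) The function x ↦ log(1 + f*(x)) is concave on [0, ∞); consequently, for FL services n = 1, …, N each with its own index set K_n and coefficients α_{n,k} > 0, c_{n,k} > 0 and corresponding inverse functions f*_n, the inter-service bandwidth allocation problem of maximizing ∑_{n=1}^N log(1 + f*_n(b_n)) over (b_1, …, b_N) with b_n ≥ 0 and ∑_{n=1}^N b_n = B is the maximization of a concave function over a convex set. -/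
/-!
Write `b(f) = ∑ₖ αₖ f / (1 - cₖ f)`. Each summand is `(αₖ / cₖ) ((1 - cₖ f)⁻¹ - 1)`, so `b` is
strictly increasing and convex on `[0, 1 / maxₖ cₖ)`. The inverse of an increasing convex function
is concave, hence so is `f*`, and `log (1 + f*)` is concave as a nondecreasing concave function of a
concave function. The objective `∑ₙ log (1 + f*ₙ (bₙ))` is then a sum of concave functions of the
coordinates, and the feasible set is a scaled standard simplex.
-/

open Set Finset Real

section General

variable {𝕜 E β : Type*} [Semiring 𝕜] [PartialOrder 𝕜]

theorem ConvexOn.concaveOn_of_leftInvOn [AddCommMonoid E] [PartialOrder E] [SMul 𝕜 E]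
    [AddCommMonoid β] [LinearOrder β] [SMul 𝕜 β] {s : Set E} {t : Set β} {f : E → β}
    {g : β → E} (hg : ConvexOn 𝕜 t g) (hg' : StrictMonoOn g t) (hs : Convex 𝕜 s)
    (hf : MapsTo f s t) (hgf : LeftInvOn g f s) : ConcaveOn 𝕜 s f := by
  refine ⟨hs, fun x hx y hy a b ha hb hab => not_lt.1 fun hlt => lt_irrefl (a • x + b • y) ?_⟩
  have hxy : a • x + b • y ∈ s := hs hx hy ha hb hab
  calc a • x + b • y = g (f (a • x + b • y)) := (hgf hxy).symm
    _ < g (a • f x + b • f y) := hg' (hf hxy) (hg.1 (hf hx) (hf hy) ha hb hab) hlt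
    _ ≤ a • g (f x) + b • g (f y) := hg.2 (hf hx) (hf hy) ha hb hab
    _ = a • x + b • y := by rw [hgf hx, hgf hy]

theorem ConcaveOn.comp_of_mapsTo {γ : Type*} [AddCommMonoid E] [SMul 𝕜 E] [AddCommMonoid β]
    [PartialOrder β] [SMul 𝕜 β] [AddCommMonoid γ] [PartialOrder γ] [SMul 𝕜 γ]
    {s : Set E} {t : Set β} {f : E → β} {g : β → γ}
    (hg : ConcaveOn 𝕜 t g) (hf : ConcaveOn 𝕜 s f) (hg' : MonotoneOn g t) (hst : MapsTo f s t) :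
    ConcaveOn 𝕜 s (g ∘ f) :=
  ⟨hf.1, fun _ hx _ hy _ _ ha hb hab =>
    (hg.2 (hst hx) (hst hy) ha hb hab).trans <|
      hg' (hg.1 (hst hx) (hst hy) ha hb hab) (hst (hf.1 hx hy ha hb hab)) (hf.2 hx hy ha hb hab)⟩

section Sum

variable [AddCommMonoid E] [SMul 𝕜 E] [AddCommMonoid β] [PartialOrder β] [IsOrderedAddMonoid β]
  [Module 𝕜 β] {ι : Type*} {s : Set E}

theorem ConvexOn.sum {t : Finset ι} {f : ι → E → β} (hs : Convex 𝕜 s)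
    (hf : ∀ i ∈ t, ConvexOn 𝕜 s (f i)) : ConvexOn 𝕜 s (∑ i ∈ t, f i) :=
  Finset.sum_induction _ (ConvexOn 𝕜 s) (fun _ _ => ConvexOn.add) (convexOn_const (0 : β) hs) hf

theorem ConcaveOn.sum {t : Finset ι} {f : ι → E → β} (hs : Convex 𝕜 s)
    (hf : ∀ i ∈ t, ConcaveOn 𝕜 s (f i)) : ConcaveOn 𝕜 s (∑ i ∈ t, f i) :=
  ConvexOn.sum (β := βᵒᵈ) hs hf

end Sum

theorem concaveOn_sum_comp_eval {F ι : Type*} [Fintype ι] [AddCommMonoid F] [Module 𝕜 F]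
    [AddCommMonoid β] [PartialOrder β] [IsOrderedAddMonoid β] [Module 𝕜 β]
    {t : ι → Set F} {g : ι → F → β} (hg : ∀ i, ConcaveOn 𝕜 (t i) (g i)) {s : Set (ι → F)}
    (hs : Convex 𝕜 s) (hst : ∀ b ∈ s, ∀ i, b i ∈ t i) :
    ConcaveOn 𝕜 s fun b => ∑ i, g i (b i) := by
  refine (ConcaveOn.sum (t := Finset.univ) hs fun i _ => ?_).congr fun b _ => Finset.sum_apply ..
  exact ((hg i).comp_linearMap (LinearMap.proj (R := 𝕜) (φ := fun _ : ι => F) i)).subset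
    (fun b hb => hst b hb i) hs

theorem convex_setOf_nonneg_sum_eq {ι : Type*} [Fintype ι] [IsOrderedRing 𝕜] (B : 𝕜) :
    Convex 𝕜 {b : ι → 𝕜 | (∀ i, 0 ≤ b i) ∧ ∑ i, b i = B} := by
  refine fun f hf g hg a b ha hb hab => ⟨fun i => ?_, ?_⟩
  · apply_rules [add_nonneg, mul_nonneg, hf.1, hg.1]
  · simp_rw [Pi.add_apply, Pi.smul_apply]
    rw [Finset.sum_add_distrib, ← Finset.smul_sum, ← Finset.smul_sum, hf.2, hg.2, smul_eq_mul,
      smul_eq_mul, ← add_mul, hab, one_mul]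

end General

section Summand

variable {a c u : ℝ}

theorem one_sub_mul_pos (hc : 0 < c) (hu : u < c⁻¹) : 0 < 1 - c * u := by
  have := mul_lt_mul_of_pos_left hu hc
  rw [mul_inv_cancel₀ hc.ne'] at this
  linarith

theorem mul_div_one_sub_mul_eq (hc : 0 < c) (hu : 0 < 1 - c * u) :
    a * u / (1 - c * u) = a / c * ((1 - c * u)⁻¹ - 1) := by
  rw [← one_div, div_sub_one hu.ne', sub_sub_cancel, div_mul_div_comm, mul_left_comm a,
    mul_div_mul_left _ _ hc.ne']

theorem convexOn_inv_one_sub_mul (hc : 0 < c) : ConvexOn ℝ (Iio c⁻¹) fun u => (1 - c * u)⁻¹ := by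
  refine ⟨convex_Iio _, fun x hx y hy a b ha hb hab => ?_⟩
  have h := (convexOn_zpow (𝕜 := ℝ) (-1)).2 (one_sub_mul_pos hc hx) (one_sub_mul_pos hc hy)
    ha hb hab
  simp only [smul_eq_mul, zpow_neg_one] at h ⊢
  rwa [show 1 - c * (a * x + b * y) = a * (1 - c * x) + b * (1 - c * y) by
    linear_combination -hab]

theorem convexOn_mul_div_one_sub_mul (ha : 0 ≤ a) (hc : 0 < c) :
    ConvexOn ℝ (Iio c⁻¹) fun u => a * u / (1 - c * u) :=
  (((convexOn_inv_one_sub_mul hc).sub (concaveOn_const 1 (convex_Iio _))).smul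
    (div_nonneg ha hc.le)).congr fun _ hu =>
      (mul_div_one_sub_mul_eq hc (one_sub_mul_pos hc hu)).symm

theorem strictMonoOn_mul_div_one_sub_mul_s8 (ha : 0 < a) (hc : 0 < c) :
    StrictMonoOn (fun u => a * u / (1 - c * u)) (Iio c⁻¹) := by
  intro u hu v hv huv
  have hu' := one_sub_mul_pos hc hu
  have hv' := one_sub_mul_pos hc hv
  simp only [mul_div_one_sub_mul_eq hc hu', mul_div_one_sub_mul_eq hc hv']
  gcongr

end Summand

/-- The paper's `b_n(f)`: the bandwidth a service needs to run at FL frequency `f`. -/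
noncomputable def requiredBandwidth {κ : Type*} [Fintype κ] (α c : κ → ℝ) (f : ℝ) : ℝ :=
  ∑ k, α k * f / (1 - c k * f)

section Bandwidth

variable {κ : Type*} [Fintype κ] [Nonempty κ] {α c : κ → ℝ}

theorem Iio_one_div_sup'_subset (hc : ∀ k, 0 < c k) (k : κ) :
    Iio (1 / univ.sup' univ_nonempty c) ⊆ Iio (c k)⁻¹ :=
  Iio_subset_Iio <| (one_div _).trans_le <| inv_anti₀ (hc k) (le_sup' c (mem_univ k))

theorem convexOn_requiredBandwidth (hα : ∀ k, 0 ≤ α k) (hc : ∀ k, 0 < c k) :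
    ConvexOn ℝ (Iio (1 / univ.sup' univ_nonempty c)) (requiredBandwidth α c) := by
  refine (ConvexOn.sum (t := univ) (convex_Iio _) fun k _ => ?_).congr fun u _ =>
    Finset.sum_apply ..
  exact (convexOn_mul_div_one_sub_mul (hα k) (hc k)).subset (Iio_one_div_sup'_subset hc k)
    (convex_Iio _)

theorem strictMonoOn_requiredBandwidth (hα : ∀ k, 0 < α k) (hc : ∀ k, 0 < c k) :
    StrictMonoOn (requiredBandwidth α c) (Iio (1 / univ.sup' univ_nonempty c)) :=
  fun _ hu _ hv huv => Finset.sum_lt_sum_of_nonempty univ_nonempty fun k _ =>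
    strictMonoOn_mul_div_one_sub_mul_s8 (hα k) (hc k) (Iio_one_div_sup'_subset hc k hu)
      (Iio_one_div_sup'_subset hc k hv) huv

theorem concaveOn_log_one_add_of_leftInvOn_requiredBandwidth (hα : ∀ k, 0 < α k)
    (hc : ∀ k, 0 < c k) {f : ℝ → ℝ}
    (hrange : ∀ x : ℝ, 0 ≤ x → f x ∈ Ico (0 : ℝ) (1 / univ.sup' univ_nonempty c))
    (hinv : LeftInvOn (requiredBandwidth α c) f (Ici 0)) :
    ConcaveOn ℝ (Ici 0) fun x => log (1 + f x) := by
  have hf : ConcaveOn ℝ (Ici 0) f :=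
    (convexOn_requiredBandwidth (fun k => (hα k).le) hc).concaveOn_of_leftInvOn
      (strictMonoOn_requiredBandwidth hα hc) (convex_Ici 0) (fun x hx => (hrange x hx).2) hinv
  exact strictConcaveOn_log_Ioi.concaveOn.comp_of_mapsTo ((concaveOn_const 1 hf.1).add hf)
    strictMonoOn_log.monotoneOn fun x hx => show 0 < 1 + f x by linarith [(hrange x hx).1]

end Bandwidth

theorem stmt_8_general {N : ℕ} (ι : Fin N → Type*) [∀ n, Fintype (ι n)] [∀ n, Nonempty (ι n)]
    (α c : ∀ n, ι n → ℝ)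
    (hα : ∀ n k, 0 < α n k) (hc : ∀ n k, 0 < c n k)
    (fstar : Fin N → ℝ → ℝ)
    (hrange : ∀ n, ∀ x : ℝ, 0 ≤ x →
      fstar n x ∈ Set.Ico (0 : ℝ) (1 / Finset.univ.sup' Finset.univ_nonempty (c n)))
    (hinv : ∀ n, ∀ x : ℝ, 0 ≤ x →
      ∑ k, α n k * fstar n x / (1 - c n k * fstar n x) = x)
    (B : ℝ) :
    (∀ n, ConcaveOn ℝ (Set.Ici 0) (fun x => Real.log (1 + fstar n x))) ∧
    Convex ℝ {b : Fin N → ℝ | (∀ n, 0 ≤ b n) ∧ ∑ n, b n = B} ∧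
    ConcaveOn ℝ {b : Fin N → ℝ | (∀ n, 0 ≤ b n) ∧ ∑ n, b n = B}
      (fun b => ∑ n, Real.log (1 + fstar n (b n))) := by
  have hlog n : ConcaveOn ℝ (Ici 0) fun x => log (1 + fstar n x) :=
    concaveOn_log_one_add_of_leftInvOn_requiredBandwidth (hα n) (hc n) (hrange n) (hinv n)
  have hfeasible := convex_setOf_nonneg_sum_eq (ι := Fin N) B
  exact ⟨hlog, hfeasible, concaveOn_sum_comp_eval hlog hfeasible fun b hb n => hb.1 n⟩

/-- (Proposition 1) `x ↦ log(1 + f*_n(x))` is concave on `[0,∞)` for each service `n`;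
consequently the inter-service bandwidth allocation problem maximizes a concave function
over a convex set. -/
theorem stmt_8 {N : ℕ} (ι : Fin N → Type*) [∀ n, Fintype (ι n)] [∀ n, Nonempty (ι n)]
    (α c : ∀ n, ι n → ℝ)
    (hα : ∀ n k, 0 < α n k) (hc : ∀ n k, 0 < c n k)
    (fstar : Fin N → ℝ → ℝ)
    (hrange : ∀ n, ∀ x : ℝ, 0 ≤ x →
      fstar n x ∈ Set.Ico (0 : ℝ) (1 / Finset.univ.sup' Finset.univ_nonempty (c n)))
    (hinv : ∀ n, ∀ x : ℝ, 0 ≤ x →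
      ∑ k, α n k * fstar n x / (1 - c n k * fstar n x) = x)
    (B : ℝ) (hB : 0 < B) :
    (∀ n, ConcaveOn ℝ (Set.Ici 0) (fun x => Real.log (1 + fstar n x))) ∧
    Convex ℝ {b : Fin N → ℝ | (∀ n, 0 ≤ b n) ∧ ∑ n, b n = B} ∧
    ConcaveOn ℝ {b : Fin N → ℝ | (∀ n, 0 ≤ b n) ∧ ∑ n, b n = B}
      (fun b => ∑ n, Real.log (1 + fstar n (b n))) :=
  stmt_8_general ι α c hα hc fstar hrange hinv B
end

section
/- For every λ > 0, the function b ↦ log(1 + f*(b)) − λ·b has a unique maximizer on [0, ∞). -/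
/-!
The bandwidth function `b` is strictly increasing and convex on `[0, 1 / max c)`, so its inverse
`f*` is strictly increasing and concave on `[0, ∞)`; its image is an interval, so it is also
continuous. Hence `x ↦ log (1 + f* x) - λ x` is continuous and strictly concave on `[0, ∞)`, and
it is negative for large `x` because `f*` is bounded: it attains its maximum exactly once.
-/

open Set Filter Real

section RightInverse

variable {B f : ℝ → ℝ} {s t : Set ℝ}

theorem StrictMonoOn.strictMonoOn_of_leftInvOn (hB : StrictMonoOn B s) (hf : MapsTo f t s)
    (hBf : LeftInvOn B f t) : StrictMonoOn f t := fun x hx y hy hxy =>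
  (hB.lt_iff_lt (hf hx) (hf hy)).1 (by rwa [hBf hx, hBf hy])

theorem ConvexOn.concaveOn_of_leftInvOn_s9 (hB : ConvexOn ℝ s B) (hBm : StrictMonoOn B s)
    (ht : Convex ℝ t) (hf : MapsTo f t s) (hBf : LeftInvOn B f t) : ConcaveOn ℝ t f := by
  refine ⟨ht, fun x hx y hy a b ha hb hab => ?_⟩
  have hxy := ht hx hy ha hb hab
  refine (hBm.le_iff_le (hB.1 (hf hx) (hf hy) ha hb hab) (hf hxy)).1 ?_
  calc B (a • f x + b • f y) ≤ a • B (f x) + b • B (f y) := hB.2 (hf hx) (hf hy) ha hb hab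
    _ = B (f (a • x + b • y)) := by rw [hBf hx, hBf hy, hBf hxy]

end RightInverse

theorem StrictMonoOn.continuousOn_Ici_of_image_eq_Ico {α β : Type*} [LinearOrder α]
    [TopologicalSpace α] [OrderTopology α] [LinearOrder β] [TopologicalSpace β] [OrderTopology β]
    [DenselyOrdered β] {f : α → β} {a : α} {b M : β} (hf : StrictMonoOn f (Ici a))
    (himg : f '' Ici a = Ico b M) : ContinuousOn f (Ici a) := by
  have hmem : ∀ x ∈ Ici a, f x ∈ Ico b M := fun x hx => himg ▸ mem_image_of_mem f hx
  intro x hx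
  rcases (mem_Ici.1 hx).eq_or_lt with rfl | hax
  · exact hf.continuousWithinAt_right_of_image_mem_nhdsWithin self_mem_nhdsWithin
      (himg ▸ Ico_mem_nhdsGE_of_mem (hmem _ hx))
  · refine (continuousAt_of_monotoneOn_of_image_mem_nhds hf.monotoneOn (Ici_mem_nhds hax)
      (himg ▸ Ico_mem_nhds ?_ (hmem x hx).2)).continuousWithinAt
    exact (hmem a self_mem_Ici).1.trans_lt (hf self_mem_Ici hx hax)

theorem strictMonoOn_div_one_sub_mul (c : ℝ) :
    StrictMonoOn (fun u => u / (1 - c * u)) {u | c * u < 1} := by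
  intro u hu v hv huv
  simp only [mem_ofPred_eq] at hu hv
  rw [div_lt_div_iff₀ (sub_pos.2 hu) (sub_pos.2 hv)]
  nlinarith

theorem convexOn_div_one_sub_mul {c : ℝ} (hc : 0 ≤ c) :
    ConvexOn ℝ {u | c * u < 1} fun u => u / (1 - c * u) := by
  have hconv : Convex ℝ {u : ℝ | c * u < 1} :=
    convex_halfSpace_lt (IsLinearMap.isLinearMap_smul c) 1
  refine ⟨hconv, fun u hu v hv a b ha hb hab => ?_⟩
  simp only [mem_ofPred_eq, smul_eq_mul] at hu hv ⊢
  have hd : 0 < 1 - c * (a * u + b * v) := sub_pos.2 (hconv hu hv ha hb hab)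
  have hu' := sub_pos.2 hu
  have hv' := sub_pos.2 hv
  rw [mul_div_assoc', mul_div_assoc', div_add_div _ _ hu'.ne' hv'.ne',
    div_le_div_iff₀ hd (mul_pos hu' hv')]
  obtain rfl : b = 1 - a := by linarith
  nlinarith [mul_nonneg (mul_nonneg (mul_nonneg ha hb) hc) (sq_nonneg (u - v))]

section Bandwidth

variable {ι : Type*} [Fintype ι] {α c : ι → ℝ} {s : Set ℝ}

noncomputable def bandwidth (α c : ι → ℝ) (f : ℝ) : ℝ := ∑ k, α k * f / (1 - c k * f)

theorem strictMonoOn_bandwidth [Nonempty ι] (hα : ∀ k, 0 < α k)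
    (hsub : ∀ k, s ⊆ {u | c k * u < 1}) : StrictMonoOn (bandwidth α c) s :=
  fun u hu v hv huv => Finset.sum_lt_sum_of_nonempty Finset.univ_nonempty fun k _ => by
    simpa only [mul_div_assoc] using mul_lt_mul_of_pos_left
      (strictMonoOn_div_one_sub_mul (c k) (hsub k hu) (hsub k hv) huv) (hα k)

theorem convexOn_bandwidth (hα : ∀ k, 0 ≤ α k) (hc : ∀ k, 0 ≤ c k) (hs : Convex ℝ s)
    (hsub : ∀ k, s ⊆ {u | c k * u < 1}) : ConvexOn ℝ s (bandwidth α c) := by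
  have hterm (k : ι) : ConvexOn ℝ s fun u => α k * u / (1 - c k * u) := by
    simpa only [smul_eq_mul, mul_div_assoc] using
      ((convexOn_div_one_sub_mul (hc k)).subset (hsub k) hs).smul (hα k)
  refine ⟨hs, fun u hu v hv a b ha hb hab => ?_⟩
  simp only [bandwidth, smul_eq_mul, Finset.mul_sum, ← Finset.sum_add_distrib]
  exact Finset.sum_le_sum fun k _ => (hterm k).2 hu hv ha hb hab

theorem Ico_subset_setOf_mul_lt_one [Nonempty ι] (hc : ∀ k, 0 < c k) (k : ι) :
    Ico 0 (1 / Finset.univ.sup' Finset.univ_nonempty c) ⊆ {u | c k * u < 1} := by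
  rintro u ⟨hu, huM⟩
  have hck : c k ≤ Finset.univ.sup' Finset.univ_nonempty c := Finset.le_sup' c (Finset.mem_univ k)
  calc c k * u ≤ Finset.univ.sup' Finset.univ_nonempty c * u := by gcongr
    _ < 1 := by rwa [lt_div_iff₀' ((hc k).trans_le hck)] at huM

end Bandwidth

section Objective

variable {f : ℝ → ℝ}

theorem strictConcaveOn_log_one_add_sub_mul {s : Set ℝ} (hf : ConcaveOn ℝ s f) (hinj : InjOn f s)
    (himg : Convex ℝ (f '' s)) (hpos : ∀ x ∈ s, 0 < 1 + f x) (lam : ℝ) :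
    StrictConcaveOn ℝ s fun x => log (1 + f x) - lam * x := by
  have hsub : f '' s ⊆ (fun z => 1 + z) ⁻¹' Ioi 0 := by
    rintro _ ⟨x, hx, rfl⟩
    exact hpos x hx
  have hlog := (strictConcaveOn_log_Ioi.translate_right 1).subset hsub himg
  have hmono : MonotoneOn (log ∘ fun z => 1 + z) (f '' s) := fun y hy z _ hyz =>
    log_le_log (hsub hy) (by linarith)
  exact (hlog.comp_concaveOn hf hmono hinj).sub_convexOn ((LinearMap.mulLeft ℝ lam).convexOn hf.1)

theorem exists_isMaxOn_log_one_add_sub_mul {M lam : ℝ} (hcont : ContinuousOn f (Ici 0))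
    (hf : MapsTo f (Ici 0) (Ico 0 M)) (hlam : 0 < lam) :
    ∃ x ∈ Ici 0, IsMaxOn (fun x => log (1 + f x) - lam * x) (Ici 0) x := by
  have hpos (x : ℝ) (hx : x ∈ Ici 0) : 0 < 1 + f x := by linarith [(hf hx).1]
  refine ContinuousOn.exists_isMaxOn' ?_ isClosed_Ici self_mem_Ici ?_
  · exact ((continuousOn_const.add hcont).log fun x hx => (hpos x hx).ne').sub
      (continuousOn_const.mul continuousOn_id)
  -- beyond `log (1 + M) / lam` the objective is negative, while it is nonnegative at `0`
  rw [eventually_inf_principal]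
  filter_upwards [(isCompact_Icc (a := 0) (b := log (1 + M) / lam)).compl_mem_cocompact]
    with x hxK hx
  have hlt : log (1 + M) / lam < x := by
    simpa only [mem_compl_iff, mem_Icc, mem_Ici.1 hx, true_and, not_le] using hxK
  have hlog : log (1 + f x) < log (1 + M) := log_lt_log (hpos x hx) (by linarith [(hf hx).2])
  have hlog0 : 0 ≤ log (1 + f 0) := log_nonneg (by linarith [(hf self_mem_Ici).1])
  rw [div_lt_iff₀' hlam] at hlt
  simp only [mul_zero, sub_zero]
  linarith

end Objective

/-- For every `λ > 0`, the function `b ↦ log(1 + f*(b)) − λ·b` has a unique maximizer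
on `[0, ∞)`. -/
theorem stmt_9 {ι : Type*} [Fintype ι] [Nonempty ι] (α c : ι → ℝ)
    (hα : ∀ k, 0 < α k) (hc : ∀ k, 0 < c k)
    (fstar : ℝ → ℝ)
    (hrange : ∀ x : ℝ, 0 ≤ x →
      fstar x ∈ Set.Ico (0 : ℝ) (1 / Finset.univ.sup' Finset.univ_nonempty c))
    (hinv : ∀ x : ℝ, 0 ≤ x → ∑ k, α k * fstar x / (1 - c k * fstar x) = x)
    (lam : ℝ) (hlam : 0 < lam) :
    ∃! bstar : ℝ, 0 ≤ bstar ∧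
      ∀ b : ℝ, 0 ≤ b →
        Real.log (1 + fstar b) - lam * b ≤ Real.log (1 + fstar bstar) - lam * bstar := by
  set s := Ico (0 : ℝ) (1 / Finset.univ.sup' Finset.univ_nonempty c)
  have hmaps : MapsTo fstar (Ici 0) s := hrange
  have hleft : LeftInvOn (bandwidth α c) fstar (Ici 0) := hinv
  have hsub := Ico_subset_setOf_mul_lt_one hc
  have hB : StrictMonoOn (bandwidth α c) s := strictMonoOn_bandwidth hα hsub
  have h0 : (0 : ℝ) ∈ s := ⟨le_rfl, (hrange 0 le_rfl).1.trans_lt (hrange 0 le_rfl).2⟩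
  have hBmaps : MapsTo (bandwidth α c) s (Ici 0) := fun u hu => by
    simpa only [bandwidth, mul_zero, zero_div, Finset.sum_const_zero, mem_Ici] using
      hB.monotoneOn h0 hu hu.1
  have himg : fstar '' Ici 0 = s := (InvOn.bijOn
    ⟨hleft, hB.injOn.rightInvOn_of_leftInvOn hleft hBmaps hmaps⟩ hmaps hBmaps).image_eq
  have hmono := hB.strictMonoOn_of_leftInvOn hmaps hleft
  have hconc := (convexOn_bandwidth (fun k => (hα k).le) (fun k => (hc k).le) (convex_Ico _ _)
    hsub).concaveOn_of_leftInvOn_s9 hB (convex_Ici 0) hmaps hleft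
  have hstrict := strictConcaveOn_log_one_add_sub_mul hconc hmono.injOn (himg ▸ convex_Ico _ _)
    (fun x hx => by linarith [(hmaps hx).1]) lam
  obtain ⟨b, hb, hmax⟩ :=
    exists_isMaxOn_log_one_add_sub_mul (hmono.continuousOn_Ici_of_image_eq_Ico himg) hmaps hlam
  exact ⟨b, ⟨hb, hmax⟩, fun y hy => hstrict.eq_of_isMaxOn hy.2 hmax hy.1 hb⟩
end

section
/- (Proposition 2, uniqueness of the market clearing price) For each service n define the bandwidth demand function d_n(p) = sup{ b ≥ 0 : (f*_n)′(b) ≥ p } for p > 0 (with d_n(p) = 0 when p ≥ (f*_n)′(0)). Then for every B > 0 there exists exactly one ρ > 0 such that ∑_{n=1}^N d_n(ρ) = B. -/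
/-!
Write `ψₙ(b) = bₙ'(f*ₙ(b))`. By the inverse function theorem `(f*ₙ)'(b) = 1 / ψₙ(b)` for `b > 0`,
and `ψₙ` maps `[0, ∞)` strictly increasingly onto `[∑ₖ αₙₖ, ∞)`, because `bₙ'` is strictly
increasing and blows up at `1 / maxₖ cₙₖ`. Hence the demand at price `ρ` is
`ψₙ⁻¹(max (1/ρ) ψₙ(0))`. In the variable `q = 1/ρ` each demand is monotone with range `[0, ∞)`,
hence continuous, vanishes for `q ≤ 0` and is strictly increasing where positive. The aggregate
demand inherits all of this and is unbounded, so the intermediate value theorem yields a clearing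
price, and strict monotonicity on `{demand > 0}` makes it unique.
-/

open Set

namespace BandwidthMarket

section ClippedInverse

variable {ψ : ℝ → ℝ} {q q' b : ℝ}

noncomputable def clippedInv (ψ : ℝ → ℝ) (q : ℝ) : ℝ := Function.invFunOn ψ (Ici 0) (max q (ψ 0))

lemma clippedInv_mem (hsurj : SurjOn ψ (Ici 0) (Ici (ψ 0))) (q : ℝ) :
    clippedInv ψ q ∈ Ici 0 :=
  Function.invFunOn_mem (hsurj (le_max_right q (ψ 0)))

lemma apply_clippedInv (hsurj : SurjOn ψ (Ici 0) (Ici (ψ 0))) (q : ℝ) :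
    ψ (clippedInv ψ q) = max q (ψ 0) :=
  Function.invFunOn_eq (hsurj (le_max_right q (ψ 0)))

variable (hψ : StrictMonoOn ψ (Ici 0)) (hsurj : SurjOn ψ (Ici 0) (Ici (ψ 0)))
include hψ hsurj

lemma clippedInv_eq_zero (hq : q ≤ ψ 0) : clippedInv ψ q = 0 :=
  hψ.injOn (clippedInv_mem hsurj q) self_mem_Ici
    (by rw [apply_clippedInv hsurj, max_eq_right hq])

lemma le_clippedInv_iff (hb : 0 < b) : b ≤ clippedInv ψ q ↔ ψ b ≤ q := by
  rw [← hψ.le_iff_le hb.le (clippedInv_mem hsurj q), apply_clippedInv hsurj, le_max_iff,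
    or_iff_left (not_le.mpr (hψ self_mem_Ici hb.le hb))]

lemma monotone_clippedInv : Monotone (clippedInv ψ) := fun q q' hqq' =>
  (hψ.le_iff_le (clippedInv_mem hsurj q) (clippedInv_mem hsurj q')).mp <| by
    rw [apply_clippedInv hsurj, apply_clippedInv hsurj]
    exact max_le_max hqq' le_rfl

lemma range_clippedInv : range (clippedInv ψ) = Ici 0 := by
  refine (range_subset_iff.mpr (clippedInv_mem hsurj)).antisymm fun b hb => ⟨ψ b, ?_⟩
  refine hψ.injOn (clippedInv_mem hsurj _) hb ?_
  rw [apply_clippedInv hsurj, max_eq_left (hψ.monotoneOn self_mem_Ici hb hb)]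

lemma clippedInv_lt_clippedInv (hqq' : q < q') (hpos : 0 < clippedInv ψ q) :
    clippedInv ψ q < clippedInv ψ q' := by
  have hq : ψ 0 < q := by
    by_contra! hq
    exact hpos.ne' (clippedInv_eq_zero hψ hsurj hq)
  rw [← hψ.lt_iff_lt (clippedInv_mem hsurj q) (clippedInv_mem hsurj q'),
    apply_clippedInv hsurj, apply_clippedInv hsurj, max_eq_left hq.le]
  exact hqq'.trans_le (le_max_left _ _)

end ClippedInverse

theorem _root_.Monotone.continuous_of_range_eq_Ici {h : ℝ → ℝ} (hmono : Monotone h)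
    (hrange : range h = Ici 0) : Continuous h := by
  have hnonneg (q : ℝ) : 0 ≤ h q := hrange.subset (mem_range_self q)
  let h' : ℝ → NNReal := fun q => ⟨h q, hnonneg q⟩
  have : Continuous h' := by
    refine Monotone.continuous_of_surjective (fun _ _ hqq' => hmono hqq') fun t => ?_
    obtain ⟨q, hq⟩ := hrange.symm.subset t.2
    exact ⟨q, Subtype.ext hq⟩
  exact continuous_subtype_val.comp this

theorem existsUnique_sum_eq {ι : Type*} [Fintype ι] [Nonempty ι] {H : ι → ℝ → ℝ}
    (hmono : ∀ i, Monotone (H i)) (hrange : ∀ i, range (H i) = Ici 0)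
    (hlt : ∀ i q q', q < q' → 0 < H i q → H i q < H i q') {q₀ : ℝ} (hq₀ : ∀ i, H i q₀ = 0)
    {B : ℝ} (hB : 0 < B) : ∃! q, ∑ i, H i q = B := by
  have hnonneg (i : ι) (q : ℝ) : 0 ≤ H i q := (hrange i).subset (mem_range_self q)
  have hcont : Continuous fun q => ∑ i, H i q :=
    continuous_finsetSum _ fun i _ => (hmono i).continuous_of_range_eq_Ici (hrange i)
  have hstrict : StrictMonoOn (fun q => ∑ i, H i q) {q | 0 < ∑ i, H i q} := by
    intro q hq q' _ hqq'
    obtain ⟨i, -, hi⟩ := Finset.exists_lt_of_sum_lt (by simpa using hq : ∑ _i : ι, (0 : ℝ) < _)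
    exact Finset.sum_lt_sum (fun j _ => hmono j hqq'.le) ⟨i, Finset.mem_univ i, hlt i q q' hqq' hi⟩
  obtain ⟨i⟩ := ‹Nonempty ι›
  obtain ⟨q₁, hq₁⟩ := (hrange i).symm.subset (mem_Ici.mpr hB.le)
  obtain ⟨q, hq⟩ := intermediate_value_univ q₀ q₁ hcont
    ⟨by simp [hq₀, hB.le], hq₁ ▸ Finset.single_le_sum (fun j _ => hnonneg j q₁) (Finset.mem_univ i)⟩
  refine ⟨q, hq, fun q' hq' => hstrict.injOn ?_ ?_ (hq'.trans hq.symm)⟩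
  · simpa [hq'] using hB
  · simpa [hq] using hB

theorem sSup_eq_of_forall_pos_mem_iff {S : Set ℝ} {t : ℝ} (hS : S ⊆ Ici 0)
    (hmem : ∀ b, 0 < b → (b ∈ S ↔ b ≤ t)) (ht : 0 ≤ t) : sSup S = t := by
  have hub : ∀ b ∈ S, b ≤ t := by
    intro b hb
    rcases (mem_Ici.mp (hS hb)).eq_or_lt with rfl | hb₀
    exacts [ht, (hmem b hb₀).mp hb]
  refine le_antisymm (Real.sSup_le hub ht) ?_
  rcases ht.eq_or_lt with rfl | ht
  · exact Real.sSup_nonneg fun b hb => hS hb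
  · exact le_csSup ⟨t, hub⟩ ((hmem t ht).mpr le_rfl)

section Service

variable {K : Type*} [Fintype K] {a c : K → ℝ}

variable (a c) in
noncomputable def bandwidth (f : ℝ) : ℝ := ∑ k, a k * f / (1 - c k * f)

variable (a c) in
noncomputable def bandwidthDeriv (f : ℝ) : ℝ := ∑ k, a k / (1 - c k * f) ^ 2

lemma bandwidth_zero : bandwidth a c 0 = 0 := by simp [bandwidth]

lemma bandwidthDeriv_zero : bandwidthDeriv a c 0 = ∑ k, a k := by simp [bandwidthDeriv]

variable [Nonempty K]

variable (c) in
noncomputable def cMax : ℝ := Finset.univ.sup' Finset.univ_nonempty c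

lemma le_cMax (k : K) : c k ≤ cMax c := Finset.le_sup' c (Finset.mem_univ k)

lemma cMax_pos (hc : ∀ k, 0 < c k) : 0 < cMax c :=
  (hc (Classical.arbitrary K)).trans_le (le_cMax _)

lemma one_sub_mul_pos (hc : ∀ k, 0 < c k) {f : ℝ} (hf : f ∈ Ico 0 (1 / cMax c)) (k : K) :
    0 < 1 - c k * f := by
  have h1 : c k * f ≤ cMax c * f := mul_le_mul_of_nonneg_right (le_cMax k) hf.1
  have h2 : f * cMax c < 1 := (lt_div_iff₀ (cMax_pos hc)).mp hf.2
  linarith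

lemma bandwidth_nonneg (ha : ∀ k, 0 < a k) (hc : ∀ k, 0 < c k) {f : ℝ}
    (hf : f ∈ Ico 0 (1 / cMax c)) : 0 ≤ bandwidth a c f :=
  Finset.sum_nonneg fun k _ =>
    div_nonneg (mul_nonneg (ha k).le hf.1) (one_sub_mul_pos hc hf k).le

lemma bandwidthDeriv_pos (ha : ∀ k, 0 < a k) (hc : ∀ k, 0 < c k) {f : ℝ}
    (hf : f ∈ Ico 0 (1 / cMax c)) : 0 < bandwidthDeriv a c f :=
  Finset.sum_pos (fun k _ => div_pos (ha k) (pow_pos (one_sub_mul_pos hc hf k) 2))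
    Finset.univ_nonempty

lemma strictMonoOn_bandwidth (ha : ∀ k, 0 < a k) (hc : ∀ k, 0 < c k) :
    StrictMonoOn (bandwidth a c) (Ico 0 (1 / cMax c)) := by
  intro f₁ hf₁ f₂ hf₂ hlt
  refine Finset.sum_lt_sum_of_nonempty Finset.univ_nonempty fun k _ => ?_
  rw [div_lt_div_iff₀ (one_sub_mul_pos hc hf₁ k) (one_sub_mul_pos hc hf₂ k)]
  nlinarith [mul_lt_mul_of_pos_left hlt (ha k)]

lemma strictMonoOn_bandwidthDeriv (ha : ∀ k, 0 < a k) (hc : ∀ k, 0 < c k) :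
    StrictMonoOn (bandwidthDeriv a c) (Ico 0 (1 / cMax c)) := by
  intro f₁ hf₁ f₂ hf₂ hlt
  refine Finset.sum_lt_sum_of_nonempty Finset.univ_nonempty fun k _ => ?_
  have hden := one_sub_mul_pos hc hf₂ k
  refine div_lt_div_of_pos_left (ha k) (pow_pos hden 2) (pow_lt_pow_left₀ ?_ hden.le two_ne_zero)
  nlinarith [hc k]

lemma hasDerivAt_bandwidth (hc : ∀ k, 0 < c k) {f : ℝ} (hf : f ∈ Ico 0 (1 / cMax c)) :
    HasDerivAt (bandwidth a c) (bandwidthDeriv a c f) f := by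
  refine HasDerivAt.fun_sum fun k _ => ?_
  have hden := (one_sub_mul_pos hc hf k).ne'
  refine (((hasDerivAt_id' f).const_mul (a k)).fun_div
    (((hasDerivAt_id' f).const_mul (c k)).const_sub 1) hden).congr_deriv ?_
  field_simp
  ring

lemma continuousOn_bandwidthDeriv (hc : ∀ k, 0 < c k) :
    ContinuousOn (bandwidthDeriv a c) (Ico 0 (1 / cMax c)) :=
  continuousOn_finsetSum _ fun k _ => continuousOn_const.div (by fun_prop)
    fun _ hf => pow_ne_zero 2 (one_sub_mul_pos hc hf k).ne'

lemma exists_le_bandwidthDeriv (ha : ∀ k, 0 < a k) (hc : ∀ k, 0 < c k) {q : ℝ} (hq : 0 < q) :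
    ∃ f ∈ Ico 0 (1 / cMax c), q ≤ bandwidthDeriv a c f := by
  obtain ⟨k, -, hk⟩ : ∃ k ∈ Finset.univ, cMax c = c k :=
    Finset.exists_mem_eq_sup' Finset.univ_nonempty c
  have hC := cMax_pos hc
  have hak := ha k
  -- With `cMax c = c k`, the `k`-th summand at `(1 - ε) / cMax c` is `(q + a k) ^ 2 / a k ≥ q`.
  set ε := a k / (q + a k)
  have hε : 0 < ε := by positivity
  have hε1 : ε < 1 := (div_lt_one (by linarith)).mpr (by linarith)
  refine ⟨(1 - ε) / cMax c, ⟨by have := hε1.le; positivity, by gcongr; linarith⟩, ?_⟩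
  have hterm : q ≤ a k / (1 - c k * ((1 - ε) / cMax c)) ^ 2 := by
    rw [← hk, mul_div_cancel₀ _ hC.ne', sub_sub_cancel, le_div_iff₀ (by positivity)]
    simp only [ε, div_pow]
    rw [mul_div_assoc', div_le_iff₀ (by positivity)]
    nlinarith [mul_pos hq hak]
  refine hterm.trans (Finset.single_le_sum (f := fun k => a k / (1 - c k * _) ^ 2)
    (fun k _ => div_nonneg (ha k).le (sq_nonneg _)) (Finset.mem_univ k))

lemma surjOn_bandwidthDeriv (ha : ∀ k, 0 < a k) (hc : ∀ k, 0 < c k) :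
    SurjOn (bandwidthDeriv a c) (Ico 0 (1 / cMax c)) (Ici (∑ k, a k)) := by
  intro q hq
  have hq₀ : 0 < q := (Finset.sum_pos (fun k _ => ha k) Finset.univ_nonempty).trans_le hq
  obtain ⟨f, hf, hqf⟩ := exists_le_bandwidthDeriv ha hc hq₀
  have hIcc : Icc 0 f ⊆ Ico 0 (1 / cMax c) := fun x hx => ⟨hx.1, hx.2.trans_lt hf.2⟩
  obtain ⟨s, hs, rfl⟩ := intermediate_value_Icc hf.1 ((continuousOn_bandwidthDeriv hc).mono hIcc)
    ⟨bandwidthDeriv_zero (a := a) (c := c) ▸ hq, hqf⟩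
  exact ⟨s, hIcc hs, rfl⟩

section Inverse

variable {fs : ℝ → ℝ} (ha : ∀ k, 0 < a k) (hc : ∀ k, 0 < c k)
  (hrange : MapsTo fs (Ici 0) (Ico 0 (1 / cMax c)))
  (hinv : LeftInvOn (bandwidth a c) fs (Ici 0))
include ha hc hrange hinv

lemma strictMonoOn_of_leftInvOn_bandwidth : StrictMonoOn fs (Ici 0) := fun _ hx _ hy hxy =>
  ((strictMonoOn_bandwidth ha hc).lt_iff_lt (hrange hx) (hrange hy)).mp
    (by rwa [hinv hx, hinv hy])

lemma surjOn_of_leftInvOn_bandwidth : SurjOn fs (Ici 0) (Ico 0 (1 / cMax c)) :=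
  have hmaps : MapsTo (bandwidth a c) (Ico 0 (1 / cMax c)) (Ici 0) :=
    fun _ hf => bandwidth_nonneg ha hc hf
  ((strictMonoOn_bandwidth ha hc).injOn.rightInvOn_of_leftInvOn hinv hmaps hrange).surjOn hmaps

lemma apply_zero_of_leftInvOn_bandwidth : fs 0 = 0 :=
  (strictMonoOn_bandwidth ha hc).injOn (hrange self_mem_Ici)
    ⟨le_rfl, one_div_pos.mpr (cMax_pos hc)⟩ (by rw [hinv self_mem_Ici, bandwidth_zero])

lemma hasDerivAt_of_leftInvOn_bandwidth {b : ℝ} (hb : 0 < b) :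
    HasDerivAt fs (bandwidthDeriv a c (fs b))⁻¹ b := by
  have hmono := strictMonoOn_of_leftInvOn_bandwidth ha hc hrange hinv
  have hfb : 0 < fs b := apply_zero_of_leftInvOn_bandwidth ha hc hrange hinv ▸
    hmono self_mem_Ici hb.le hb
  have hcont : ContinuousAt fs b := by
    refine hmono.continuousAt_of_image_mem_nhds (Ici_mem_nhds hb) ?_
    rw [(surjOn_of_leftInvOn_bandwidth ha hc hrange hinv).image_eq_of_mapsTo hrange]
    exact Ico_mem_nhds hfb (hrange hb.le).2
  refine HasDerivAt.of_local_left_inverse hcont (hasDerivAt_bandwidth hc (hrange hb.le))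
    (bandwidthDeriv_pos ha hc (hrange hb.le)).ne' ?_
  filter_upwards [Ici_mem_nhds hb] with x hx using hinv hx

lemma strictMonoOn_bandwidthDeriv_comp : StrictMonoOn (bandwidthDeriv a c ∘ fs) (Ici 0) :=
  (strictMonoOn_bandwidthDeriv ha hc).comp (strictMonoOn_of_leftInvOn_bandwidth ha hc hrange hinv)
    hrange

lemma surjOn_bandwidthDeriv_comp :
    SurjOn (bandwidthDeriv a c ∘ fs) (Ici 0) (Ici ((bandwidthDeriv a c ∘ fs) 0)) := by
  rw [Function.comp_apply, apply_zero_of_leftInvOn_bandwidth ha hc hrange hinv,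
    bandwidthDeriv_zero]
  exact (surjOn_bandwidthDeriv ha hc).comp (surjOn_of_leftInvOn_bandwidth ha hc hrange hinv)

theorem sSup_demand_eq_clippedInv {p : ℝ} (hp : 0 < p) :
    sSup {b : ℝ | 0 ≤ b ∧ p ≤ derivWithin fs (Ici 0) b} =
      clippedInv (bandwidthDeriv a c ∘ fs) p⁻¹ := by
  have hψ := strictMonoOn_bandwidthDeriv_comp ha hc hrange hinv
  have hsurj := surjOn_bandwidthDeriv_comp ha hc hrange hinv
  refine sSup_eq_of_forall_pos_mem_iff (fun b hb => hb.1) (fun b hb => ?_)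
    (clippedInv_mem hsurj _)
  rw [le_clippedInv_iff hψ hsurj hb, mem_ofPred_eq, and_iff_right hb.le,
    derivWithin_of_mem_nhds (Ici_mem_nhds hb),
    (hasDerivAt_of_leftInvOn_bandwidth ha hc hrange hinv hb).deriv,
    le_inv_comm₀ hp (bandwidthDeriv_pos ha hc (hrange hb.le))]
  rfl

end Inverse

end Service

end BandwidthMarket

open BandwidthMarket

/-- (Proposition 2, uniqueness of the market clearing price) With bandwidth demand
functions `d_n(p) = sup{b ≥ 0 : (f*_n)′(b) ≥ p}`, for every `B > 0` there is exactly one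
price `ρ > 0` such that `∑_n d_n(ρ) = B`. -/
theorem stmt_13 {N : ℕ} (hN : 0 < N)
    (ι : Fin N → Type*) [∀ n, Fintype (ι n)] [∀ n, Nonempty (ι n)]
    (α c : ∀ n, ι n → ℝ)
    (hα : ∀ n k, 0 < α n k) (hc : ∀ n k, 0 < c n k)
    (fstar : Fin N → ℝ → ℝ)
    (hrange : ∀ n, ∀ x : ℝ, 0 ≤ x →
      fstar n x ∈ Set.Ico (0 : ℝ) (1 / Finset.univ.sup' Finset.univ_nonempty (c n)))
    (hinv : ∀ n, ∀ x : ℝ, 0 ≤ x →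
      ∑ k, α n k * fstar n x / (1 - c n k * fstar n x) = x)
    (B : ℝ) (hB : 0 < B) :
    ∃! ρ : ℝ, 0 < ρ ∧
      ∑ n, sSup {b : ℝ | 0 ≤ b ∧ ρ ≤ derivWithin (fstar n) (Set.Ici 0) b} = B := by
  have : Nonempty (Fin N) := ⟨⟨0, hN⟩⟩
  set ψ : Fin N → ℝ → ℝ := fun n => bandwidthDeriv (α n) (c n) ∘ fstar n
  have hψ (n) := strictMonoOn_bandwidthDeriv_comp (hα n) (hc n) (hrange n) (hinv n)
  have hsurj (n) := surjOn_bandwidthDeriv_comp (hα n) (hc n) (hrange n) (hinv n)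
  have hψ₀ (n) : 0 < ψ n 0 := bandwidthDeriv_pos (hα n) (hc n) (hrange n 0 le_rfl)
  have hdemand {ρ : ℝ} (hρ : 0 < ρ) :
      ∑ n, sSup {b : ℝ | 0 ≤ b ∧ ρ ≤ derivWithin (fstar n) (Set.Ici 0) b} =
        ∑ n, clippedInv (ψ n) ρ⁻¹ :=
    Finset.sum_congr rfl fun n _ =>
      sSup_demand_eq_clippedInv (hα n) (hc n) (hrange n) (hinv n) hρ
  have hzero {q : ℝ} (hq : q ≤ 0) (n : Fin N) : clippedInv (ψ n) q = 0 :=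
    clippedInv_eq_zero (hψ n) (hsurj n) (hq.trans (hψ₀ n).le)
  obtain ⟨q, hqB, huniq⟩ := existsUnique_sum_eq (fun n => monotone_clippedInv (hψ n) (hsurj n))
    (fun n => range_clippedInv (hψ n) (hsurj n))
    (fun n _ _ => clippedInv_lt_clippedInv (hψ n) (hsurj n)) (hzero le_rfl) hB
  have hq : 0 < q := by
    by_contra! hq
    exact hB.ne' (hqB.symm.trans (Finset.sum_eq_zero fun n _ => hzero hq n))
  refine ⟨q⁻¹, ⟨inv_pos.mpr hq, (hdemand (inv_pos.mpr hq)).trans ((inv_inv q).symm ▸ hqB)⟩, ?_⟩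
  rintro ρ ⟨hρ, hρB⟩
  rw [← inv_inv ρ, huniq ρ⁻¹ ((hdemand hρ).symm.trans hρB)]
end
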